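/- arXiv:2103.05995 — 2 statements merged into one kernel-verified Lean document; each statement's English description precedes it below -/
import Mathlib

section
/- Let G0 be a connected finite simple graph containing distinct vertices u1, u2, u3, u4 with d_{G0}(u1) = 1, d_{G0}(u2) = 2, d_{G0}(u3) ∈ {3, 4}, d_{G0}(u4) = 1, such that u1u2 and u3u4 are edges of G0. Let P = v1v2⋯vl (l ≥ 1) be a path vertex-disjoint from G0, let G1 be the graph obtained from the disjoint union of G0 and P by adding the edge u1v1, and let G2 be obtained from G1 by deleting the edge u1v1 and adding the edge u4v1. Then SO(G1) > SO(G2). -/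
/-!
Both graphs are `B + e` for `B = G₀ ⊔ P` and a single new edge `e` at `v₁`, which contributes
`√(2² + (d(v₁) + 1)²)` in either case. Since `u₁` and `u₄` are pendant in `B`, the only other
terms that change are those of `u₁u₂` and `u₃u₄`, so `SO(G₁) - SO(G₂) = φ(d(u₂)) - φ(d(u₃))` with
`φ t = √(4 + t²) - √(1 + t²) = 3 / (√(4 + t²) + √(1 + t²))`. As `φ` is strictly decreasing on
`t ≥ 0` and `d(u₂) = 2 < d(u₃)`, the difference is positive.
-/

open SimpleGraph

/-- Degree of a vertex (instance-free version). -/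
noncomputable def gdeg {V : Type*} [Fintype V] (G : SimpleGraph V) (v : V) : ℕ :=
  (Set.toFinite (G.neighborSet v)).toFinset.card

/-- Sombor index: sum over edges of sqrt(d(u)^2 + d(v)^2). -/
noncomputable def SO {V : Type*} [Fintype V] (G : SimpleGraph V) : ℝ :=
  ∑ e ∈ (Set.toFinite G.edgeSet).toFinset,
    Sym2.lift ⟨fun u v => Real.sqrt ((gdeg G u : ℝ) ^ 2 + (gdeg G v : ℝ) ^ 2),
      fun u v => by dsimp only; rw [add_comm]⟩ e

/-- Reduced Sombor index: sum over edges of sqrt((d(u)-1)^2 + (d(v)-1)^2). -/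
noncomputable def SOred {V : Type*} [Fintype V] (G : SimpleGraph V) : ℝ :=
  ∑ e ∈ (Set.toFinite G.edgeSet).toFinset,
    Sym2.lift ⟨fun u v => Real.sqrt (((gdeg G u : ℝ) - 1) ^ 2 + ((gdeg G v : ℝ) - 1) ^ 2),
      fun u v => by dsimp only; rw [add_comm]⟩ e

lemma sqrt_add_sq_sub_sqrt_add_sq_eq {a b : ℝ} (ha : 0 < a) (hb : 0 ≤ b) (t : ℝ) :
    √(a + t ^ 2) - √(b + t ^ 2) = (a - b) / (√(a + t ^ 2) + √(b + t ^ 2)) := by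
  have hpos : 0 < √(a + t ^ 2) + √(b + t ^ 2) := by positivity
  rw [eq_div_iff hpos.ne']
  linear_combination Real.sq_sqrt (by positivity : 0 ≤ a + t ^ 2) -
    Real.sq_sqrt (by positivity : 0 ≤ b + t ^ 2)

lemma strictAntiOn_sqrt_add_sq_sub_sqrt_add_sq {a b : ℝ} (hb : 0 ≤ b) (hba : b < a) :
    StrictAntiOn (fun t : ℝ ↦ √(a + t ^ 2) - √(b + t ^ 2)) (Set.Ici 0) := by
  intro s hs t _ hst
  have ha : 0 < a := hb.trans_lt hba
  have hsq : s ^ 2 < t ^ 2 := pow_lt_pow_left₀ hst hs two_ne_zero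
  simp only [sqrt_add_sq_sub_sqrt_add_sq_eq ha hb]
  gcongr

section

variable {V : Type*}

lemma neighborSet_sup_edge_left (B : SimpleGraph V) {x y : V} (hxy : x ≠ y) :
    (B ⊔ edge x y).neighborSet x = insert y (B.neighborSet x) := by
  ext w
  simp only [mem_neighborSet, sup_adj, edge_adj, Set.mem_insert_iff]
  grind

lemma neighborSet_sup_edge_of_ne (B : SimpleGraph V) {x y v : V} (hvx : v ≠ x) (hvy : v ≠ y) :
    (B ⊔ edge x y).neighborSet v = B.neighborSet v := by
  ext w
  simp only [mem_neighborSet, sup_adj, edge_adj]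
  grind

lemma sup_edge_deleteEdges (B : SimpleGraph V) {x y : V} (hn : ¬B.Adj x y) :
    (B ⊔ edge x y).deleteEdges {s(x, y)} = B := by
  simp [deleteEdges_sup, hn]

variable [Fintype V]

lemma gdeg_eq_ncard (G : SimpleGraph V) (v : V) : gdeg G v = (G.neighborSet v).ncard :=
  (Set.ncard_eq_toFinset_card _ _).symm

lemma gdeg_sup_edge_left (B : SimpleGraph V) {x y : V} (hxy : x ≠ y) (hn : ¬B.Adj x y) :
    gdeg (B ⊔ edge x y) x = gdeg B x + 1 := by
  rw [gdeg_eq_ncard, gdeg_eq_ncard, neighborSet_sup_edge_left B hxy,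
    Set.ncard_insert_of_notMem (show y ∉ B.neighborSet x from hn) (Set.toFinite _)]

lemma gdeg_sup_edge_right (B : SimpleGraph V) {x y : V} (hxy : x ≠ y) (hn : ¬B.Adj x y) :
    gdeg (B ⊔ edge x y) y = gdeg B y + 1 := by
  rw [edge_comm]
  exact gdeg_sup_edge_left B hxy.symm fun h ↦ hn h.symm

lemma gdeg_sup_edge_of_ne (B : SimpleGraph V) {x y v : V} (hvx : v ≠ x) (hvy : v ≠ y) :
    gdeg (B ⊔ edge x y) v = gdeg B v := by
  rw [gdeg_eq_ncard, gdeg_eq_ncard, neighborSet_sup_edge_of_ne B hvx hvy]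

lemma gdeg_sum_inl {W : Type*} [Fintype W] (G : SimpleGraph V) (H : SimpleGraph W) (v : V) :
    gdeg (G ⊕g H) (Sum.inl v) = gdeg G v := by
  have : (G ⊕g H).neighborSet (Sum.inl v) = Sum.inl '' G.neighborSet v := by
    ext w; cases w <;> simp [mem_neighborSet]
  rw [gdeg_eq_ncard, gdeg_eq_ncard, this, Set.ncard_image_of_injective _ Sum.inl_injective]

lemma eq_of_gdeg_eq_one {G : SimpleGraph V} {v a b : V} (hv : gdeg G v = 1) (ha : G.Adj v a)
    (hb : G.Adj v b) : a = b := by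
  rw [gdeg_eq_ncard, Set.ncard_eq_one] at hv
  obtain ⟨c, hc⟩ := hv
  have ha' : a ∈ G.neighborSet v := ha
  have hb' : b ∈ G.neighborSet v := hb
  rw [hc, Set.mem_singleton_iff] at ha' hb'
  rw [ha', hb']

noncomputable def somborTerm (G : SimpleGraph V) : Sym2 V → ℝ :=
  Sym2.lift ⟨fun u v ↦ √((gdeg G u : ℝ) ^ 2 + (gdeg G v : ℝ) ^ 2),
    fun u v ↦ by dsimp only; rw [add_comm]⟩

lemma SO_eq_sum_somborTerm (G : SimpleGraph V) :
    SO G = ∑ e ∈ (Set.toFinite G.edgeSet).toFinset, somborTerm G e := rfl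

@[simp]
lemma somborTerm_mk (G : SimpleGraph V) (u v : V) :
    somborTerm G s(u, v) = √((gdeg G u : ℝ) ^ 2 + (gdeg G v : ℝ) ^ 2) := rfl

lemma somborTerm_congr {G H : SimpleGraph V} {e : Sym2 V}
    (h : ∀ v ∈ e, gdeg G v = gdeg H v) : somborTerm G e = somborTerm H e := by
  induction e using Sym2.ind with
  | _ u v => simp [h u (Sym2.mem_mk_left u v), h v (Sym2.mem_mk_right u v)]

lemma SO_sup_edge (B : SimpleGraph V) {x y : V} (hxy : x ≠ y) (hn : ¬B.Adj x y) :
    SO (B ⊔ edge x y) = somborTerm (B ⊔ edge x y) s(x, y) +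
      ∑ e ∈ (Set.toFinite B.edgeSet).toFinset, somborTerm (B ⊔ edge x y) e := by
  classical
  have hE : (Set.toFinite (B ⊔ edge x y).edgeSet).toFinset =
      insert s(x, y) (Set.toFinite B.edgeSet).toFinset := by
    ext e
    simp [edgeSet_edge_of_ne hxy]
  rw [SO_eq_sum_somborTerm, hE, Finset.sum_insert (by simpa using hn)]

lemma eq_of_mem_edgeSet_of_gdeg_eq_one {G : SimpleGraph V} {v w : V} {e : Sym2 V}
    (hv : gdeg G v = 1) (hw : G.Adj v w) (he : e ∈ G.edgeSet) (hve : v ∈ e) : e = s(v, w) := by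
  obtain ⟨u, rfl⟩ := Sym2.mem_iff_exists.1 hve
  rw [eq_of_gdeg_eq_one hv ((mem_edgeSet G).1 he) hw]

lemma gdeg_sup_edge_eq_gdeg_sup_edge (B : SimpleGraph V) {x y z v : V}
    (hxz : x ≠ z) (hyz : y ≠ z) (hnxz : ¬B.Adj x z) (hnyz : ¬B.Adj y z) (hvx : v ≠ x) (hvy : v ≠ y) :
    gdeg (B ⊔ edge x z) v = gdeg (B ⊔ edge y z) v := by
  by_cases hvz : v = z
  · subst hvz
    rw [gdeg_sup_edge_right B hxz hnxz, gdeg_sup_edge_right B hyz hnyz]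
  · rw [gdeg_sup_edge_of_ne B hvx hvz, gdeg_sup_edge_of_ne B hvy hvz]

theorem SO_sup_edge_sub_SO_sup_edge_of_pendant (B : SimpleGraph V) {x y z x' y' : V}
    (hx : gdeg B x = 1) (hy : gdeg B y = 1) (hxx' : B.Adj x x') (hyy' : B.Adj y y')
    (hxy : x ≠ y) (hnxy : ¬B.Adj x y) (hxz : x ≠ z) (hyz : y ≠ z)
    (hnxz : ¬B.Adj x z) (hnyz : ¬B.Adj y z) :
    SO (B ⊔ edge x z) - SO (B ⊔ edge y z) =
      (√(2 ^ 2 + (gdeg B x' : ℝ) ^ 2) - √(1 ^ 2 + (gdeg B x' : ℝ) ^ 2)) -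
        (√(2 ^ 2 + (gdeg B y' : ℝ) ^ 2) - √(1 ^ 2 + (gdeg B y' : ℝ) ^ 2)) := by
  classical
  have hx'x : x' ≠ x := hxx'.ne.symm
  have hy'y : y' ≠ y := hyy'.ne.symm
  have hx'y : x' ≠ y := by rintro rfl; exact hnxy hxx'
  have hy'x : y' ≠ x := by rintro rfl; exact hnxy hyy'.symm
  have hx'z : x' ≠ z := by rintro rfl; exact hnxz hxx'
  have hy'z : y' ≠ z := by rintro rfl; exact hnyz hyy'
  set S := (Set.toFinite B.edgeSet).toFinset
  have hsub : {s(x, x'), s(y, y')} ⊆ S := by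
    simp [S, Set.insert_subset_iff, hxx', hyy']
  have hne : s(x, x') ≠ s(y, y') := by simp [hxy, hy'x.symm]
  -- Off the two pendant edges, no edge of `B` meets `x` or `y`, so its term is unchanged.
  have hrest : ∀ e ∈ S \ {s(x, x'), s(y, y')},
      somborTerm (B ⊔ edge x z) e = somborTerm (B ⊔ edge y z) e := by
    intro e he
    simp only [Finset.mem_sdiff, Finset.mem_insert, Finset.mem_singleton, not_or, S,
      Set.Finite.mem_toFinset] at he
    refine somborTerm_congr fun v hv ↦ gdeg_sup_edge_eq_gdeg_sup_edge B hxz hyz hnxz hnyz ?_ ?_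
    · rintro rfl; exact he.2.1 (eq_of_mem_edgeSet_of_gdeg_eq_one hx hxx' he.1 hv)
    · rintro rfl; exact he.2.2 (eq_of_mem_edgeSet_of_gdeg_eq_one hy hyy' he.1 hv)
  rw [SO_sup_edge B hxz hnxz, SO_sup_edge B hyz hnyz, ← Finset.sum_sdiff hsub,
    ← Finset.sum_sdiff hsub, Finset.sum_pair hne, Finset.sum_pair hne, Finset.sum_congr rfl hrest]
  simp only [somborTerm_mk, gdeg_sup_edge_left B hxz hnxz, gdeg_sup_edge_left B hyz hnyz,
    gdeg_sup_edge_right B hxz hnxz, gdeg_sup_edge_right B hyz hnyz,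
    gdeg_sup_edge_of_ne B hxy.symm hyz, gdeg_sup_edge_of_ne B hxy hxz,
    gdeg_sup_edge_of_ne B hx'x hx'z, gdeg_sup_edge_of_ne B hx'y hx'z,
    gdeg_sup_edge_of_ne B hy'x hy'z, gdeg_sup_edge_of_ne B hy'y hy'z, hx, hy]
  push_cast
  ring

end

/-- Lemma 2.1 for `SO`: moving the pendant path from the vertex u₁ of degree 1
(adjacent to a vertex of degree 2) to the vertex u₄ of degree 1 (adjacent to a vertex of
degree 3 or 4) strictly decreases the index. -/
theorem lemma21_SO {α : Type*} [Fintype α] (G₀ : SimpleGraph α)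
    (u₁ u₂ u₃ u₄ : α)
    (hdist : List.Pairwise (· ≠ ·) [u₁, u₂, u₃, u₄])
    (hd₁ : gdeg G₀ u₁ = 1) (hd₂ : gdeg G₀ u₂ = 2)
    (hd₃ : gdeg G₀ u₃ = 3 ∨ gdeg G₀ u₃ = 4) (hd₄ : gdeg G₀ u₄ = 1)
    (he₁₂ : G₀.Adj u₁ u₂) (he₃₄ : G₀.Adj u₃ u₄)
    (l : ℕ) (hl : 1 ≤ l)
    (G₁ G₂ : SimpleGraph (α ⊕ Fin l))
    (hG₁ : G₁ = (G₀ ⊕g pathGraph l) ⊔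
      fromEdgeSet {s(Sum.inl u₁, Sum.inr ⟨0, by omega⟩)})
    (hG₂ : G₂ = (G₁.deleteEdges {s(Sum.inl u₁, Sum.inr ⟨0, by omega⟩)}) ⊔
      fromEdgeSet {s(Sum.inl u₄, Sum.inr ⟨0, by omega⟩)}) :
    SO G₂ < SO G₁ := by
  obtain ⟨⟨-, -, h₁₄⟩, ⟨-, h₂₄⟩, -⟩ :
      (u₁ ≠ u₂ ∧ u₁ ≠ u₃ ∧ u₁ ≠ u₄) ∧ (u₂ ≠ u₃ ∧ u₂ ≠ u₄) ∧ u₃ ≠ u₄ := by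
    simpa using hdist
  set B := G₀ ⊕g pathGraph l
  set v₁ : α ⊕ Fin l := Sum.inr ⟨0, by omega⟩
  have hcross : ∀ u, ¬B.Adj (Sum.inl u) v₁ := by simp [B, v₁]
  have hn₁₄ : ¬B.Adj (Sum.inl u₁) (Sum.inl u₄) := fun h ↦ h₂₄ (eq_of_gdeg_eq_one hd₁ he₁₂ h)
  have hG₁' : G₁ = B ⊔ edge (Sum.inl u₁) v₁ := hG₁
  have hG₂' : G₂ = B ⊔ edge (Sum.inl u₄) v₁ := by
    rw [hG₂, hG₁', sup_edge_deleteEdges B (hcross u₁)]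
    rfl
  have hgap := SO_sup_edge_sub_SO_sup_edge_of_pendant B (x' := Sum.inl u₂) (y' := Sum.inl u₃)
    (by rwa [gdeg_sum_inl]) (by rwa [gdeg_sum_inl]) (by simpa [B] using he₁₂)
    (by simpa [B] using he₃₄.symm) (by simpa using h₁₄) hn₁₄ (by simp [v₁]) (by simp [v₁])
    (hcross u₁) (hcross u₄)
  rw [gdeg_sum_inl, gdeg_sum_inl, hd₂] at hgap
  push_cast at hgap
  have hu₃ : (2 : ℝ) < gdeg G₀ u₃ := by rcases hd₃ with h | h <;> norm_num [h]
  have hmono := strictAntiOn_sqrt_add_sq_sub_sqrt_add_sq (by norm_num : (0 : ℝ) ≤ 1 ^ 2)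
    (by norm_num : (1 : ℝ) ^ 2 < 2 ^ 2) (by norm_num : (2 : ℝ) ∈ Set.Ici 0)
    (Set.mem_Ici.2 (Nat.cast_nonneg _)) hu₃
  dsimp only at hmono
  rw [hG₁', hG₂']
  linarith
end

section
/- Let n ≥ 13. Let T1 ∈ A1, T2 ∈ A4, T3 ∈ A3, T4 ∈ A2, T5 ∈ A13, T6 ∈ A12, T7 ∈ A11, T8 ∈ A10, T9 ∈ A9, T10 ∈ A8, T11 ∈ A7, T12 ∈ A6, T13 ∈ A5 and T14 ∈ Ω(n) be chemical trees on n vertices. Then SO_red(T1) < SO_red(T2) < SO_red(T3) < SO_red(T4) < SO_red(T5) < SO_red(T6) < SO_red(T7) < SO_red(T8) < SO_red(T9) < SO_red(T10) < SO_red(T11) < SO_red(T12) < SO_red(T13) < SO_red(T14), and every chemical tree T on n vertices belonging to none of the classes A1, …, A13, Ω(n) satisfies SO_red(T14) < SO_red(T). -/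
open SimpleGraph

/-- Number of edges of a finite graph. -/
noncomputable def numEdges {V : Type*} [Fintype V] (G : SimpleGraph V) : ℕ :=
  (Set.toFinite G.edgeSet).toFinset.card

/-- Number of vertices of degree `i`. -/
noncomputable def nDeg {V : Type*} [Fintype V] (G : SimpleGraph V) (i : ℕ) : ℕ :=
  (Finset.univ.filter fun v => gdeg G v = i).card

open scoped Classical in
/-- `mij G i j` is the number of edges joining a vertex of degree `i` with a vertex of degree `j`. -/
noncomputable def mij {V : Type*} [Fintype V] (G : SimpleGraph V) (i j : ℕ) : ℕ :=
  ((Set.toFinite G.edgeSet).toFinset.filter fun e =>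
    Sym2.lift ⟨fun u v => ((gdeg G u = i ∧ gdeg G v = j) ∨ (gdeg G u = j ∧ gdeg G v = i)),
      fun u v => propext (by tauto)⟩ e).card

/-- A chemical tree: a tree in which every vertex has degree at most 4. -/
def IsChemicalTree {V : Type*} [Fintype V] (G : SimpleGraph V) : Prop :=
  G.IsTree ∧ ∀ v, gdeg G v ≤ 4

/-- Membership in the family Ω(n) of chemical trees (with n = number of vertices):
three vertices of degree 3, five of degree 1, n-8 of degree 2, and
m_{1,2} = m_{2,3} = 5, m_{1,3} = 0, m_{3,3} = 2, m_{2,2} = n - 13. -/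
def InOmega {V : Type*} [Fintype V] (G : SimpleGraph V) : Prop :=
  IsChemicalTree G ∧ nDeg G 3 = 3 ∧ nDeg G 1 = 5 ∧ nDeg G 4 = 0 ∧
    nDeg G 2 = Fintype.card V - 8 ∧
    mij G 1 2 = 5 ∧ mij G 2 3 = 5 ∧ mij G 1 3 = 0 ∧ mij G 3 3 = 2 ∧
    mij G 2 2 = Fintype.card V - 13

/-- Membership in the class of chemical trees with maximum degree at most 3,
at most two vertices of degree 3, and prescribed values of
(m_{3,3}, m_{2,3}, m_{1,2}, m_{1,3}, m_{2,2}). -/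
def InClassA {V : Type*} [Fintype V] (G : SimpleGraph V)
    (a b c d e : ℕ) : Prop :=
  G.IsTree ∧ (∀ v, gdeg G v ≤ 3) ∧ nDeg G 3 ≤ 2 ∧
    mij G 3 3 = a ∧ mij G 2 3 = b ∧ mij G 1 2 = c ∧ mij G 1 3 = d ∧ mij G 2 2 = e

/-!
For a graph of maximum degree at most 4, `SOred` is the linear form
`∑ √((i-1)² + (j-1)²) m_ij` in the numbers `m_ij` of edges with end degrees `i, j`. The fourteen
given trees therefore have explicit indices `p + q√5 + (n - r)√2` that are compared numerically.

For any other chemical tree, the handshake identities of a tree eliminate `n`, `m₁₂` and `m₂₂`: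
`SOred T - SOred Ω = ∑ c_ij m_ij - (3 + 5√5 - 6√2)`, the sum running over the pairs with an end
of degree at least 3, all `c_ij > 0`. An integer case analysis on the numbers of vertices of
degree 3 and 4, using that the vertices of degree at least 3 span a forest and that the degree-2
vertices do not form a whole component, shows that only the profiles of `A₁, …, A₁₃` and `Ω`
make `∑ ⌊100 c_ij⌋ m_ij` smaller than 570, which exceeds `100 (3 + 5√5 - 6√2)`.
-/

open SimpleGraph Finset

namespace SimpleGraph

variable {V : Type*}

lemma sum_card_filter_mem_eq_sum_degree [Fintype V] [DecidableEq V] {G : SimpleGraph V}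
    [DecidableRel G.Adj] (s : Finset V) :
    ∑ e ∈ G.edgeFinset, #{v ∈ s | v ∈ e} = ∑ v ∈ s, G.degree v := by
  simp only [card_filter, ← card_incidenceFinset_eq_degree, incidenceFinset_eq_filter]
  exact sum_comm

lemma Connected.exists_adj_mem_notMem {G : SimpleGraph V} (hG : G.Connected) {S : Set V}
    {u w : V} (hu : u ∈ S) (hw : w ∉ S) : ∃ a b, G.Adj a b ∧ a ∈ S ∧ b ∉ S := by
  obtain ⟨p⟩ := hG u w
  obtain ⟨d, -, hd⟩ := p.exists_boundary_dart S hu hw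
  exact ⟨d.fst, d.snd, d.adj, hd⟩

lemma IsAcyclic.card_edgeFinset_add_one_le [Fintype V] [Nonempty V] {G : SimpleGraph V}
    [Fintype G.edgeSet] (hG : G.IsAcyclic) : #G.edgeFinset + 1 ≤ Fintype.card V := by
  classical
  obtain ⟨F, hGF, -, hF⟩ :=
    (connected_top (V := V)).exists_isTree_le_of_le_of_isAcyclic le_top hG
  rw [← hF.card_edgeFinset]
  exact Nat.add_le_add_right (card_le_card (edgeFinset_mono hGF)) 1

lemma IsAcyclic.card_filter_edgeFinset_add_one_le [Fintype V] [DecidableEq V]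
    {G : SimpleGraph V} [DecidableRel G.Adj] (hG : G.IsAcyclic) {s : Finset V}
    (hs : s.Nonempty) : #{e ∈ G.edgeFinset | ∀ v ∈ e, v ∈ s} + 1 ≤ #s := by
  have : Nonempty (s : Set V) := hs.to_subtype
  have h := (hG.induce s).card_edgeFinset_add_one_le
  rw [← card_map (Function.Embedding.subtype (· ∈ (s : Set V))).sym2Map] at h
  convert h using 3
  · convert (map_edgeFinset_induce (G := G) (s := (s : Set V))).symm
    ext e
    simp [mem_sym2_iff]
  · simp

end SimpleGraph

section DegreePairs

open scoped Classical

variable {V : Type*} [Fintype V] {G : SimpleGraph V}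

lemma toFinite_edgeSet_toFinset (G : SimpleGraph V) :
    (Set.toFinite G.edgeSet).toFinset = G.edgeFinset := by
  ext; simp

lemma gdeg_eq_degree (v : V) : gdeg G v = G.degree v := by
  simp [gdeg, ← card_neighborFinset_eq_degree, neighborFinset]

lemma one_le_gdeg_of_adj {u v : V} (h : G.Adj u v) : 1 ≤ gdeg G u := by
  rw [gdeg_eq_degree]
  exact G.degree_pos_iff_exists_adj u |>.2 ⟨v, h⟩

lemma nDeg_eq_zero_iff {i : ℕ} : nDeg G i = 0 ↔ ∀ v, gdeg G v ≠ i := by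
  simp [nDeg, filter_eq_empty_iff]

lemma mij_eq_card_filter (i j : ℕ) :
    mij G i j = #{e ∈ G.edgeFinset | e.map (gdeg G) = s(i, j)} := by
  rw [mij, toFinite_edgeSet_toFinset]
  congr 1
  refine filter_congr fun e _ => ?_
  induction e using Sym2.ind
  simp

lemma mij_comm (i j : ℕ) : mij G i j = mij G j i := by
  simp only [mij_eq_card_filter, Sym2.eq_swap]

lemma one_le_mij_of_adj {a b : V} (hab : G.Adj a b) : 1 ≤ mij G (gdeg G a) (gdeg G b) := by
  rw [mij_eq_card_filter, Nat.one_le_iff_ne_zero, Ne, card_eq_zero, filter_eq_empty_iff]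
  exact fun h => h (show s(a, b) ∈ G.edgeFinset by simpa) rfl

lemma mij_eq_zero_of_nDeg_eq_zero {j : ℕ} (h : nDeg G j = 0) (i : ℕ) : mij G i j = 0 := by
  rw [mij_eq_card_filter, card_eq_zero, filter_eq_empty_iff]
  intro e _
  induction e using Sym2.ind
  have := nDeg_eq_zero_iff.1 h
  simp_all

lemma sum_edgeFinset_eq_sum_mij {M : Type*} [AddCommMonoid M] (g : Sym2 ℕ → M)
    (h4 : ∀ v, gdeg G v ≤ 4) :
    ∑ e ∈ G.edgeFinset, g (e.map (gdeg G)) =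
      mij G 1 1 • g s(1, 1) + mij G 1 2 • g s(1, 2) + mij G 1 3 • g s(1, 3)
      + mij G 1 4 • g s(1, 4) + mij G 2 2 • g s(2, 2) + mij G 2 3 • g s(2, 3)
      + mij G 2 4 • g s(2, 4) + mij G 3 3 • g s(3, 3) + mij G 3 4 • g s(3, 4)
      + mij G 4 4 • g s(4, 4) := by
  have hmaps : ∀ e ∈ G.edgeFinset, e.map (gdeg G) ∈ (Icc 1 4 : Finset ℕ).sym2 := by
    intro e he
    induction e using Sym2.ind with
    | _ u v =>
      have huv : G.Adj u v := by simpa using he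
      have := one_le_gdeg_of_adj huv
      have := one_le_gdeg_of_adj huv.symm
      have := h4 u
      have := h4 v
      simp only [Sym2.map_mk, mk_mem_sym2_iff, mem_Icc]
      omega
  rw [← sum_fiberwise_of_maps_to' hmaps, show (Icc 1 4 : Finset ℕ).sym2 =
    {s(1, 1), s(1, 2), s(1, 3), s(1, 4), s(2, 2), s(2, 3), s(2, 4), s(3, 3), s(3, 4), s(4, 4)}
    by decide]
  simp [← mij_eq_card_filter, add_assoc]

lemma card_edgeFinset_eq_sum_mij (h4 : ∀ v, gdeg G v ≤ 4) :
    #G.edgeFinset = mij G 1 1 + mij G 1 2 + mij G 1 3 + mij G 1 4 + mij G 2 2 + mij G 2 3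
      + mij G 2 4 + mij G 3 3 + mij G 3 4 + mij G 4 4 := by
  simpa using sum_edgeFinset_eq_sum_mij (G := G) (fun _ => (1 : ℕ)) h4

lemma handshake_by_degree (h4 : ∀ v, gdeg G v ≤ 4) :
    2 * mij G 1 1 + mij G 1 2 + mij G 1 3 + mij G 1 4 = nDeg G 1 ∧
    mij G 1 2 + 2 * mij G 2 2 + mij G 2 3 + mij G 2 4 = 2 * nDeg G 2 ∧
    mij G 1 3 + mij G 2 3 + 2 * mij G 3 3 + mij G 3 4 = 3 * nDeg G 3 ∧
    mij G 1 4 + mij G 2 4 + mij G 3 4 + 2 * mij G 4 4 = 4 * nDeg G 4 := by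
  have key (i : ℕ) : i * nDeg G i = ∑ e ∈ G.edgeFinset,
      Sym2.lift ⟨fun a b => (if a = i then 1 else 0) + (if b = i then 1 else 0),
        fun _ _ => add_comm _ _⟩ (e.map (gdeg G)) := by
    have hdeg : ∑ v ∈ {v | gdeg G v = i}, G.degree v = i * nDeg G i := by
      rw [nDeg, mul_comm, ← smul_eq_mul, ← sum_const]
      exact sum_congr rfl fun v hv => by rw [← gdeg_eq_degree, (mem_filter.1 hv).2]
    rw [← hdeg, ← sum_card_filter_mem_eq_sum_degree]
    refine sum_congr rfl fun e he => ?_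
    induction e using Sym2.ind with
    | _ u v =>
      have huv : u ≠ v := (mem_edgeFinset.1 he).ne
      have : ({x | gdeg G x = i} : Finset V).filter (· ∈ s(u, v)) =
          ({u, v} : Finset V).filter (gdeg G · = i) := by
        ext; simp; tauto
      rw [this, filter_insert, filter_singleton]
      split_ifs <;> simp_all
  have k1 := key 1
  have k2 := key 2
  have k3 := key 3
  have k4 := key 4
  simp only [sum_edgeFinset_eq_sum_mij _ h4, Sym2.lift_mk, smul_eq_mul] at k1 k2 k3 k4
  norm_num at k1 k2 k3 k4
  omega

lemma sum_nDeg (h4 : ∀ v, gdeg G v ≤ 4) :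
    nDeg G 0 + nDeg G 1 + nDeg G 2 + nDeg G 3 + nDeg G 4 = Fintype.card V := by
  have hmaps : ((univ : Finset V) : Set V).MapsTo (gdeg G) (range 5) := fun v _ => by
    simpa [Nat.lt_succ_iff] using h4 v
  simp [← card_univ, card_eq_sum_card_fiberwise hmaps, sum_range_succ, nDeg]

lemma card_filter_three_le_gdeg (h4 : ∀ v, gdeg G v ≤ 4) :
    #{v | 3 ≤ gdeg G v} = nDeg G 3 + nDeg G 4 := by
  rw [nDeg, nDeg, ← card_union_of_disjoint (disjoint_filter.2 fun v _ h => by omega)]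
  congr 1
  ext v
  have := h4 v
  simp only [mem_filter, mem_univ, true_and, mem_union]
  omega

lemma card_filter_edgeFinset_three_le_gdeg (h4 : ∀ v, gdeg G v ≤ 4) :
    #{e ∈ G.edgeFinset | ∀ v ∈ e, 3 ≤ gdeg G v} = mij G 3 3 + mij G 3 4 + mij G 4 4 := by
  have h := sum_edgeFinset_eq_sum_mij
    (Sym2.lift ⟨fun a b => if 3 ≤ a ∧ 3 ≤ b then 1 else 0, fun _ _ => by simp only [and_comm]⟩) h4
  simp only [Sym2.lift_map_apply] at h
  rw [card_filter]
  calc _ = _ := sum_congr rfl fun e _ => by induction e using Sym2.ind; simp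
    _ = _ := h
    _ = _ := by norm_num

end DegreePairs

section Trees

open scoped Classical

variable {V : Type*} [Fintype V] {G : SimpleGraph V}

lemma SimpleGraph.IsTree.one_le_gdeg (hG : G.IsTree) (hV : 2 ≤ Fintype.card V) (v : V) :
    1 ≤ gdeg G v := by
  have : Nontrivial V := Fintype.one_lt_card_iff_nontrivial.1 hV
  rw [gdeg_eq_degree, ← hG.minDegree_eq_one_of_nontrivial]
  exact G.minDegree_le_degree v

lemma SimpleGraph.Connected.mij_one_one_eq_zero (hG : G.Connected) (hV : 3 ≤ Fintype.card V) :
    mij G 1 1 = 0 := by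
  rw [mij_eq_card_filter, card_eq_zero, filter_eq_empty_iff]
  intro e he
  induction e using Sym2.ind with
  | _ u v =>
    intro huv
    simp only [Sym2.map_mk, Sym2.eq_iff, or_self, gdeg_eq_degree,
      degree_eq_one_iff_existsUnique_adj] at huv
    obtain ⟨⟨u', -, hu'⟩, ⟨v', -, hv'⟩⟩ := huv
    obtain ⟨w, -, hw⟩ := exists_mem_notMem_of_card_lt_card
      (s := {u, v}) (t := univ) (by rw [card_univ]; exact card_le_two.trans_lt hV)
    obtain ⟨a, b, hab, ha, hb⟩ := hG.exists_adj_mem_notMem (S := {u, v}) (u := u) (w := w)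
      (by simp) (by simpa using hw)
    have huv' : G.Adj u v := by simpa using he
    rcases ha with rfl | rfl
    · exact hb (Or.inr ((hu' b hab).trans (hu' v huv').symm))
    · exact hb (Or.inl ((hv' b hab).trans (hv' u huv'.symm).symm))

lemma SimpleGraph.IsAcyclic.mij_three_four_add_one_le (hG : G.IsAcyclic)
    (h4 : ∀ v, gdeg G v ≤ 4) :
    nDeg G 3 + nDeg G 4 = 0 ∨ mij G 3 3 + mij G 3 4 + mij G 4 4 + 1 ≤ nDeg G 3 + nDeg G 4 := by
  rw [← card_filter_three_le_gdeg h4, ← card_filter_edgeFinset_three_le_gdeg h4, card_eq_zero,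
    ← not_nonempty_iff_eq_empty]
  refine or_iff_not_imp_left.2 fun hs => ?_
  simpa using hG.card_filter_edgeFinset_add_one_le (not_not.1 hs)

lemma SimpleGraph.Connected.one_le_mij_two (hG : G.Connected) (h4 : ∀ v, gdeg G v ≤ 4) :
    nDeg G 2 = 0 ∨ nDeg G 2 = Fintype.card V ∨ 1 ≤ mij G 1 2 + mij G 2 3 + mij G 2 4 := by
  refine or_iff_not_imp_left.2 fun h2 => or_iff_not_imp_left.2 fun hV => ?_
  obtain ⟨u, hu⟩ := card_pos.1 (Nat.pos_of_ne_zero h2)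
  obtain ⟨w, -, hw⟩ := exists_mem_notMem_of_card_lt_card ((card_le_univ _).lt_of_ne hV)
  obtain ⟨a, b, hab, ha, hb⟩ := hG.exists_adj_mem_notMem (S := {v | gdeg G v = 2})
    (u := u) (w := w) (by simpa using hu) (by simpa using hw)
  have hab' := one_le_mij_of_adj hab
  rw [show gdeg G a = 2 from ha] at hab'
  have := h4 b
  have := one_le_gdeg_of_adj hab.symm
  have := mij_comm (G := G) 2 1
  interval_cases hb' : gdeg G b <;> simp_all <;> omega

end Trees

lemma sqrt_two_bounds : 1.4142 < √2 ∧ √2 < 1.4143 :=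
  ⟨by rw [Real.lt_sqrt] <;> norm_num, by rw [Real.sqrt_lt'] <;> norm_num⟩

lemma sqrt_five_bounds : 2.236 < √5 ∧ √5 < 2.2361 :=
  ⟨by rw [Real.lt_sqrt] <;> norm_num, by rw [Real.sqrt_lt'] <;> norm_num⟩

/-- `m_ij` counts the edges with end degrees `i ≤ j` and `n_i` the vertices of degree `i`; edges
between two leaves and isolated vertices are left out, as a tree on at least three vertices has
none. -/
structure DegreeProfile where
  (m12 m13 m14 m22 m23 m24 m33 m34 m44 n1 n2 n3 n4 : ℕ)

namespace DegreeProfile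

structure IsTreeProfile (p : DegreeProfile) (n : ℕ) : Prop where
  card_edges : p.m12 + p.m13 + p.m14 + p.m22 + p.m23 + p.m24 + p.m33 + p.m34 + p.m44 + 1 = n
  card_vertices : p.n1 + p.n2 + p.n3 + p.n4 = n
  degree_one : p.m12 + p.m13 + p.m14 = p.n1
  degree_two : p.m12 + 2 * p.m22 + p.m23 + p.m24 = 2 * p.n2
  degree_three : p.m13 + p.m23 + 2 * p.m33 + p.m34 = 3 * p.n3
  degree_four : p.m14 + p.m24 + p.m34 + 2 * p.m44 = 4 * p.n4
  forest : p.n3 + p.n4 = 0 ∨ p.m33 + p.m34 + p.m44 + 1 ≤ p.n3 + p.n4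
  connected : p.n2 = 0 ∨ p.n2 = n ∨ 1 ≤ p.m12 + p.m23 + p.m24

noncomputable def soRed (p : DegreeProfile) : ℝ :=
  p.m12 + 2 * p.m13 + 3 * p.m14 + √2 * p.m22 + √5 * p.m23 + √10 * p.m24 + 2 * √2 * p.m33
    + √13 * p.m34 + 3 * √2 * p.m44

/-- The coefficients are `⌊100 c_ij⌋` for the coefficients `c_ij` of `soRed_sub_eq`. The profile
of `Ω` has weight `566`. -/
def weight (p : DegreeProfile) : ℕ :=
  86 * p.m13 + 179 * p.m14 + 68 * p.m23 + 154 * p.m24 + 113 * p.m33 + 184 * p.m34 + 241 * p.m44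

variable {p : DegreeProfile} {n : ℕ}

lemma IsTreeProfile.n1_eq (h : p.IsTreeProfile n) : p.n1 = p.n3 + 2 * p.n4 + 2 := by
  obtain ⟨hE, hN, h1, h2, h3, h4, -, -⟩ := h
  omega

lemma IsTreeProfile.n4_eq_zero_of_weight_lt (h : p.IsTreeProfile n) (hw : p.weight < 570) :
    p.n4 = 0 := by
  obtain ⟨hE, hN, h1, h2, h3, h4, hf, hc⟩ := h
  unfold weight at hw
  omega

lemma IsTreeProfile.eq_omega_of_weight_lt (h : p.IsTreeProfile n) (hw : p.weight < 570)
    (h3 : 3 ≤ p.n3) :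
    p.n1 = 5 ∧ p.n2 + 8 = n ∧ p.n3 = 3 ∧
      p.m12 = 5 ∧ p.m13 = 0 ∧ p.m22 + 13 = n ∧ p.m23 = 5 ∧ p.m33 = 2 := by
  have := h.n4_eq_zero_of_weight_lt hw
  obtain ⟨hE, hN, h1, h2, h3, h4, hf, hc⟩ := h
  unfold weight at hw
  omega

/-- Stated for an arbitrary predicate `P` of `(m₃₃, m₂₃, m₁₂, m₁₃, m₂₂)`, so that it applies to
`InClassA G` directly. -/
lemma IsTreeProfile.classA_cases (h : p.IsTreeProfile n) (hn : 13 ≤ n) (h4 : p.n4 = 0)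
    (h3 : p.n3 ≤ 2) (P : ℕ → ℕ → ℕ → ℕ → ℕ → Prop) (hP : P p.m33 p.m23 p.m12 p.m13 p.m22) :
    P 0 0 2 0 (n - 3) ∨ P 0 1 1 2 (n - 5) ∨ P 0 2 2 1 (n - 6) ∨ P 0 3 3 0 (n - 7) ∨
    P 0 2 0 4 (n - 7) ∨ P 0 3 1 3 (n - 8) ∨ P 0 4 2 2 (n - 9) ∨ P 1 1 1 3 (n - 7) ∨
    P 0 5 3 1 (n - 10) ∨ P 1 2 2 2 (n - 8) ∨ P 0 6 4 0 (n - 11) ∨ P 1 3 3 1 (n - 9) ∨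
    P 1 4 4 0 (n - 10) := by
  obtain ⟨m12, m13, m14, m22, m23, m24, m33, m34, m44, n1, n2, n3, n4⟩ := p
  obtain ⟨hE, hN, hd1, hd2, hd3, hd4, hf, hc⟩ := h
  dsimp only at *
  subst h4
  -- without vertices of degree 4 the profile is determined by `n₃`, `m₃₃` and `m₁₃`
  obtain ⟨rfl, rfl, rfl, rfl, rfl, rfl, rfl⟩ : m14 = 0 ∧ m24 = 0 ∧ m34 = 0 ∧ m44 = 0 ∧
      m23 = 3 * n3 - 2 * m33 - m13 ∧ m12 = n3 + 2 - m13 ∧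
      m22 = n - (4 * n3 + 3 - m33 - m13) := by
    omega
  have : m33 ≤ 1 := by omega
  have : m13 ≤ 4 := by omega
  interval_cases n3 <;> interval_cases m33 <;> interval_cases m13 <;>
    first | omega | (norm_num at hP; simp [hP])

lemma IsTreeProfile.soRed_sub_eq (h : p.IsTreeProfile n) :
    p.soRed - (5 + 5 * √5 + (n - 9) * √2) =
      (4 / 3 - √2 / 3) * p.m13 + (5 / 2 - √2 / 2) * p.m14 + (√5 - 4 * √2 / 3 + 1 / 3) * p.m23
      + (√10 - 3 * √2 / 2 + 1 / 2) * p.m24 + (√2 / 3 + 2 / 3) * p.m33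
      + (√13 - 11 * √2 / 6 + 5 / 6) * p.m34 + (1 + √2) * p.m44 - (3 + 5 * √5 - 6 * √2) := by
  have hE : (p.m12 + p.m13 + p.m14 + p.m22 + p.m23 + p.m24 + p.m33 + p.m34 + p.m44 + 1 : ℝ)
      = n := by
    exact_mod_cast h.card_edges
  have h1 : (p.m12 + p.m13 + p.m14 : ℝ) = p.n3 + 2 * p.n4 + 2 := by
    exact_mod_cast h.degree_one.trans h.n1_eq
  have h3 : (p.m13 + p.m23 + 2 * p.m33 + p.m34 : ℝ) = 3 * p.n3 := by
    exact_mod_cast h.degree_three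
  have h4 : (p.m14 + p.m24 + p.m34 + 2 * p.m44 : ℝ) = 4 * p.n4 := by
    exact_mod_cast h.degree_four
  unfold soRed
  linear_combination √2 * hE + (1 - √2) * h1 + (√2 - 1) / 3 * h3 + (√2 - 1) / 2 * h4

lemma IsTreeProfile.lt_soRed (h : p.IsTreeProfile n) (hw : 570 ≤ p.weight) :
    5 + 5 * √5 + (n - 9) * √2 < p.soRed := by
  have hw' : (570 : ℝ) ≤ 86 * p.m13 + 179 * p.m14 + 68 * p.m23 + 154 * p.m24 + 113 * p.m33
      + 184 * p.m34 + 241 * p.m44 := by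
    exact_mod_cast hw
  have hterm (c w : ℝ) (m : ℕ) (hc : w ≤ c) : w * m ≤ c * m :=
    mul_le_mul_of_nonneg_right hc m.cast_nonneg
  obtain ⟨hs2, hs2'⟩ := sqrt_two_bounds
  obtain ⟨hs5, hs5'⟩ := sqrt_five_bounds
  have hs10 : 3.162 < √10 := by rw [Real.lt_sqrt] <;> norm_num
  have hs13 : 3.605 < √13 := by rw [Real.lt_sqrt] <;> norm_num
  linarith [h.soRed_sub_eq, hterm (4 / 3 - √2 / 3) 0.86 p.m13 (by linarith),
    hterm (5 / 2 - √2 / 2) 1.79 p.m14 (by linarith),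
    hterm (√5 - 4 * √2 / 3 + 1 / 3) 0.68 p.m23 (by linarith),
    hterm (√10 - 3 * √2 / 2 + 1 / 2) 1.54 p.m24 (by linarith),
    hterm (√2 / 3 + 2 / 3) 1.13 p.m33 (by linarith),
    hterm (√13 - 11 * √2 / 6 + 5 / 6) 1.84 p.m34 (by linarith),
    hterm (1 + √2) 2.41 p.m44 (by linarith)]

end DegreeProfile

section ChemicalTrees

open scoped Classical

variable {V : Type*} [Fintype V] {G : SimpleGraph V}

noncomputable def degreeProfile (G : SimpleGraph V) : DegreeProfile :=
  ⟨mij G 1 2, mij G 1 3, mij G 1 4, mij G 2 2, mij G 2 3, mij G 2 4, mij G 3 3, mij G 3 4,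
    mij G 4 4, nDeg G 1, nDeg G 2, nDeg G 3, nDeg G 4⟩

lemma SOred_eq_soRed_degreeProfile (h4 : ∀ v, gdeg G v ≤ 4) :
    SOred G = (degreeProfile G).soRed := by
  let w : Sym2 ℕ → ℝ := Sym2.lift ⟨fun a b => √(((a : ℝ) - 1) ^ 2 + ((b : ℝ) - 1) ^ 2),
    fun _ _ => by simp only [add_comm]⟩
  have h := sum_edgeFinset_eq_sum_mij w h4
  simp only [w, Sym2.lift_map_apply] at h
  have h8 : √8 = 2 * √2 := by
    rw [show (8 : ℝ) = 2 ^ 2 * 2 by norm_num, Real.sqrt_mul' _ (by norm_num),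
      Real.sqrt_sq (by norm_num)]
  have h18 : √18 = 3 * √2 := by
    rw [show (18 : ℝ) = 3 ^ 2 * 2 by norm_num, Real.sqrt_mul' _ (by norm_num),
      Real.sqrt_sq (by norm_num)]
  rw [SOred, toFinite_edgeSet_toFinset, h, DegreeProfile.soRed, degreeProfile]
  norm_num [h8, h18]
  ring

lemma IsChemicalTree.isTreeProfile (hG : IsChemicalTree G) (hV : 3 ≤ Fintype.card V) :
    (degreeProfile G).IsTreeProfile (Fintype.card V) := by
  obtain ⟨hT, h4⟩ := hG
  have hm11 := hT.connected.mij_one_one_eq_zero hV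
  have hE := hT.card_edgeFinset
  rw [card_edgeFinset_eq_sum_mij h4, hm11] at hE
  have hN := sum_nDeg h4
  rw [nDeg_eq_zero_iff.2 fun v => Nat.one_le_iff_ne_zero.1 (hT.one_le_gdeg (by omega) v)] at hN
  obtain ⟨h1, h2, h3, h4'⟩ := handshake_by_degree h4
  rw [hm11] at h1
  exact ⟨by simp only [degreeProfile]; omega, by simp only [degreeProfile]; omega,
    by simp only [degreeProfile]; omega, h2, h3, h4', hT.isAcyclic.mij_three_four_add_one_le h4,
    hT.connected.one_le_mij_two h4⟩

lemma SOred_eq_of_inClassA {a b c d e : ℕ} (h : InClassA G a b c d e) :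
    SOred G = c + 2 * d + √5 * b + √2 * (e + 2 * a) := by
  obtain ⟨-, h3, -, h33, h23, h12, h13, h22⟩ := h
  have h4 : nDeg G 4 = 0 := nDeg_eq_zero_iff.2 fun v => by have := h3 v; omega
  rw [SOred_eq_soRed_degreeProfile fun v => (h3 v).trans (by norm_num), DegreeProfile.soRed]
  simp only [degreeProfile, mij_eq_zero_of_nDeg_eq_zero h4, h33, h23, h12, h13, h22]
  push_cast
  ring

lemma SOred_eq_of_inOmega (h : InOmega G) (hV : 13 ≤ Fintype.card V) :
    SOred G = 5 + 5 * √5 + (Fintype.card V - 9) * √2 := by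
  obtain ⟨⟨-, h4⟩, -, -, hn4, -, h12, h23, h13, h33, h22⟩ := h
  rw [SOred_eq_soRed_degreeProfile h4, DegreeProfile.soRed]
  simp only [degreeProfile, mij_eq_zero_of_nDeg_eq_zero hn4, h12, h23, h13, h33, h22]
  rw [Nat.cast_sub hV]
  push_cast
  ring

lemma le_weight_degreeProfile {n : ℕ} (hG : IsChemicalTree G) (hV : Fintype.card V = n)
    (hn : 13 ≤ n)
    (hnot : ¬ InClassA G 0 0 2 0 (n - 3) ∧ ¬ InClassA G 0 1 1 2 (n - 5) ∧
      ¬ InClassA G 0 2 2 1 (n - 6) ∧ ¬ InClassA G 0 3 3 0 (n - 7) ∧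
      ¬ InClassA G 0 2 0 4 (n - 7) ∧ ¬ InClassA G 0 3 1 3 (n - 8) ∧
      ¬ InClassA G 0 4 2 2 (n - 9) ∧ ¬ InClassA G 1 1 1 3 (n - 7) ∧
      ¬ InClassA G 0 5 3 1 (n - 10) ∧ ¬ InClassA G 1 2 2 2 (n - 8) ∧
      ¬ InClassA G 0 6 4 0 (n - 11) ∧ ¬ InClassA G 1 3 3 1 (n - 9) ∧
      ¬ InClassA G 1 4 4 0 (n - 10) ∧ ¬ InOmega G) :
    570 ≤ (degreeProfile G).weight := by
  have hp := hG.isTreeProfile (by omega)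
  rw [hV] at hp
  by_contra! hw
  have h4 : nDeg G 4 = 0 := hp.n4_eq_zero_of_weight_lt hw
  by_cases h3 : nDeg G 3 ≤ 2
  · have hA : InClassA G (mij G 3 3) (mij G 2 3) (mij G 1 2) (mij G 1 3) (mij G 2 2) :=
      ⟨hG.1, fun v => by have := hG.2 v; have := nDeg_eq_zero_iff.1 h4 v; omega, h3,
        rfl, rfl, rfl, rfl, rfl⟩
    have := hp.classA_cases hn h4 h3 (InClassA G) hA
    tauto
  · obtain ⟨h1, h2, h3, h12, h13, h22, h23, h33⟩ :=
      hp.eq_omega_of_weight_lt hw (by simp only [degreeProfile]; omega)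
    simp only [degreeProfile] at h1 h2 h3 h12 h13 h22 h23 h33
    exact hnot.2.2.2.2.2.2.2.2.2.2.2.2.2
      ⟨hG, h3, h1, h4, by omega, h12, h23, h13, h33, by omega⟩

end ChemicalTrees

theorem thm34_general (n : ℕ) (hn : 13 ≤ n)
    {V1 : Type*} [Fintype V1] (T1 : SimpleGraph V1)
    {V2 : Type*} [Fintype V2] (T2 : SimpleGraph V2)
    {V3 : Type*} [Fintype V3] (T3 : SimpleGraph V3)
    {V4 : Type*} [Fintype V4] (T4 : SimpleGraph V4)
    {V5 : Type*} [Fintype V5] (T5 : SimpleGraph V5)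
    {V6 : Type*} [Fintype V6] (T6 : SimpleGraph V6)
    {V7 : Type*} [Fintype V7] (T7 : SimpleGraph V7)
    {V8 : Type*} [Fintype V8] (T8 : SimpleGraph V8)
    {V9 : Type*} [Fintype V9] (T9 : SimpleGraph V9)
    {V10 : Type*} [Fintype V10] (T10 : SimpleGraph V10)
    {V11 : Type*} [Fintype V11] (T11 : SimpleGraph V11)
    {V12 : Type*} [Fintype V12] (T12 : SimpleGraph V12)
    {V13 : Type*} [Fintype V13] (T13 : SimpleGraph V13)
    {V14 : Type*} [Fintype V14] (T14 : SimpleGraph V14) (hc14 : Fintype.card V14 = n)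
    {V : Type*} [Fintype V] (T : SimpleGraph V) (hc : Fintype.card V = n)
    (h1 : InClassA T1 0 0 2 0 (n - 3))
    (h2 : InClassA T2 0 3 3 0 (n - 7))
    (h3 : InClassA T3 0 2 2 1 (n - 6))
    (h4 : InClassA T4 0 1 1 2 (n - 5))
    (h5 : InClassA T5 1 4 4 0 (n - 10))
    (h6 : InClassA T6 1 3 3 1 (n - 9))
    (h7 : InClassA T7 0 6 4 0 (n - 11))
    (h8 : InClassA T8 1 2 2 2 (n - 8))
    (h9 : InClassA T9 0 5 3 1 (n - 10))
    (h10 : InClassA T10 1 1 1 3 (n - 7))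
    (h11 : InClassA T11 0 4 2 2 (n - 9))
    (h12 : InClassA T12 0 3 1 3 (n - 8))
    (h13 : InClassA T13 0 2 0 4 (n - 7))
    (h14 : InOmega T14)
    (hT : IsChemicalTree T)
    (hTnot : ¬ InClassA T 0 0 2 0 (n - 3) ∧
      ¬ InClassA T 0 1 1 2 (n - 5) ∧
      ¬ InClassA T 0 2 2 1 (n - 6) ∧
      ¬ InClassA T 0 3 3 0 (n - 7) ∧
      ¬ InClassA T 0 2 0 4 (n - 7) ∧
      ¬ InClassA T 0 3 1 3 (n - 8) ∧
      ¬ InClassA T 0 4 2 2 (n - 9) ∧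
      ¬ InClassA T 1 1 1 3 (n - 7) ∧
      ¬ InClassA T 0 5 3 1 (n - 10) ∧
      ¬ InClassA T 1 2 2 2 (n - 8) ∧
      ¬ InClassA T 0 6 4 0 (n - 11) ∧
      ¬ InClassA T 1 3 3 1 (n - 9) ∧
      ¬ InClassA T 1 4 4 0 (n - 10) ∧
      ¬ InOmega T) :
    SOred T1 < SOred T2 ∧
    SOred T2 < SOred T3 ∧
    SOred T3 < SOred T4 ∧
    SOred T4 < SOred T5 ∧
    SOred T5 < SOred T6 ∧
    SOred T6 < SOred T7 ∧
    SOred T7 < SOred T8 ∧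
    SOred T8 < SOred T9 ∧
    SOred T9 < SOred T10 ∧
    SOred T10 < SOred T11 ∧
    SOred T11 < SOred T12 ∧
    SOred T12 < SOred T13 ∧
    SOred T13 < SOred T14 ∧
    SOred T14 < SOred T := by
  have hOmegaT : 5 + 5 * √5 + (n - 9) * √2 < SOred T := by
    have := (hT.isTreeProfile (hc ▸ le_trans (by norm_num) hn)).lt_soRed
      (le_weight_degreeProfile hT hc hn hTnot)
    rwa [hc, ← SOred_eq_soRed_degreeProfile hT.2] at this
  rw [SOred_eq_of_inClassA h1, SOred_eq_of_inClassA h2, SOred_eq_of_inClassA h3,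
    SOred_eq_of_inClassA h4, SOred_eq_of_inClassA h5, SOred_eq_of_inClassA h6,
    SOred_eq_of_inClassA h7, SOred_eq_of_inClassA h8, SOred_eq_of_inClassA h9,
    SOred_eq_of_inClassA h10, SOred_eq_of_inClassA h11, SOred_eq_of_inClassA h12,
    SOred_eq_of_inClassA h13, SOred_eq_of_inOmega h14 (hc14 ▸ hn), hc14]
  obtain ⟨hs2, hs2'⟩ := sqrt_two_bounds
  obtain ⟨hs5, hs5'⟩ := sqrt_five_bounds
  -- with `n = m + 13`, `norm_num` casts the truncated differences `n - k` to `ℝ`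
  obtain ⟨m, rfl⟩ := Nat.exists_eq_add_of_le' hn
  norm_num at hOmegaT ⊢
  refine ⟨?_, ?_, ?_, ?_, ?_, ?_, ?_, ?_, ?_, ?_, ?_, ?_, ?_, hOmegaT⟩ <;> linarith

/-- thm34: ordering of chemical trees on n ≥ 13 vertices by the index `SOred`. -/
theorem thm34 (n : ℕ) (hn : 13 ≤ n)
    {V1 : Type*} [Fintype V1] (T1 : SimpleGraph V1) (hc1 : Fintype.card V1 = n)
    {V2 : Type*} [Fintype V2] (T2 : SimpleGraph V2) (hc2 : Fintype.card V2 = n)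
    {V3 : Type*} [Fintype V3] (T3 : SimpleGraph V3) (hc3 : Fintype.card V3 = n)
    {V4 : Type*} [Fintype V4] (T4 : SimpleGraph V4) (hc4 : Fintype.card V4 = n)
    {V5 : Type*} [Fintype V5] (T5 : SimpleGraph V5) (hc5 : Fintype.card V5 = n)
    {V6 : Type*} [Fintype V6] (T6 : SimpleGraph V6) (hc6 : Fintype.card V6 = n)
    {V7 : Type*} [Fintype V7] (T7 : SimpleGraph V7) (hc7 : Fintype.card V7 = n)
    {V8 : Type*} [Fintype V8] (T8 : SimpleGraph V8) (hc8 : Fintype.card V8 = n)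
    {V9 : Type*} [Fintype V9] (T9 : SimpleGraph V9) (hc9 : Fintype.card V9 = n)
    {V10 : Type*} [Fintype V10] (T10 : SimpleGraph V10) (hc10 : Fintype.card V10 = n)
    {V11 : Type*} [Fintype V11] (T11 : SimpleGraph V11) (hc11 : Fintype.card V11 = n)
    {V12 : Type*} [Fintype V12] (T12 : SimpleGraph V12) (hc12 : Fintype.card V12 = n)
    {V13 : Type*} [Fintype V13] (T13 : SimpleGraph V13) (hc13 : Fintype.card V13 = n)
    {V14 : Type*} [Fintype V14] (T14 : SimpleGraph V14) (hc14 : Fintype.card V14 = n)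
    {V : Type*} [Fintype V] (T : SimpleGraph V) (hc : Fintype.card V = n)
    (h1 : InClassA T1 0 0 2 0 (n - 3))
    (h2 : InClassA T2 0 3 3 0 (n - 7))
    (h3 : InClassA T3 0 2 2 1 (n - 6))
    (h4 : InClassA T4 0 1 1 2 (n - 5))
    (h5 : InClassA T5 1 4 4 0 (n - 10))
    (h6 : InClassA T6 1 3 3 1 (n - 9))
    (h7 : InClassA T7 0 6 4 0 (n - 11))
    (h8 : InClassA T8 1 2 2 2 (n - 8))
    (h9 : InClassA T9 0 5 3 1 (n - 10))
    (h10 : InClassA T10 1 1 1 3 (n - 7))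
    (h11 : InClassA T11 0 4 2 2 (n - 9))
    (h12 : InClassA T12 0 3 1 3 (n - 8))
    (h13 : InClassA T13 0 2 0 4 (n - 7))
    (h14 : InOmega T14)
    (hT : IsChemicalTree T)
    (hTnot : ¬ InClassA T 0 0 2 0 (n - 3) ∧
      ¬ InClassA T 0 1 1 2 (n - 5) ∧
      ¬ InClassA T 0 2 2 1 (n - 6) ∧
      ¬ InClassA T 0 3 3 0 (n - 7) ∧
      ¬ InClassA T 0 2 0 4 (n - 7) ∧
      ¬ InClassA T 0 3 1 3 (n - 8) ∧
      ¬ InClassA T 0 4 2 2 (n - 9) ∧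
      ¬ InClassA T 1 1 1 3 (n - 7) ∧
      ¬ InClassA T 0 5 3 1 (n - 10) ∧
      ¬ InClassA T 1 2 2 2 (n - 8) ∧
      ¬ InClassA T 0 6 4 0 (n - 11) ∧
      ¬ InClassA T 1 3 3 1 (n - 9) ∧
      ¬ InClassA T 1 4 4 0 (n - 10) ∧
      ¬ InOmega T) :
    SOred T1 < SOred T2 ∧
    SOred T2 < SOred T3 ∧
    SOred T3 < SOred T4 ∧
    SOred T4 < SOred T5 ∧
    SOred T5 < SOred T6 ∧
    SOred T6 < SOred T7 ∧
    SOred T7 < SOred T8 ∧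
    SOred T8 < SOred T9 ∧
    SOred T9 < SOred T10 ∧
    SOred T10 < SOred T11 ∧
    SOred T11 < SOred T12 ∧
    SOred T12 < SOred T13 ∧
    SOred T13 < SOred T14 ∧
    SOred T14 < SOred T :=
  thm34_general n hn T1 T2 T3 T4 T5 T6 T7 T8 T9 T10 T11 T12 T13 T14 hc14 T hc h1 h2 h3 h4 h5 h6 h7
    h8 h9 h10 h11 h12 h13 h14 hT hTnot
end
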